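/- Let G be a finite abelian group, let A, D ⊆ G be sets with D = −D, let μ be a real number with μ ≥ (1/|A|)·∑_{x ∈ D} (A∘A)(x), and let f : G → ℝ be a nonnegative function with ∑_x f(x)² = 1, supported on A, satisfying μ·f(x) = A(x)·(D∗f)(x) for all x ∈ G, where (D∗f)(x) = ∑_{y ∈ D} f(x − y) and A(x) is the indicator of A. Then μ² · E(A, f) ≤ ∑_{x,y,z ∈ A} D(x−y)·D(x−z)·(A∘A)(y−z), where D(·) denotes the indicator of D. -/
import Mathlib

open scoped BigOperators

/-- `(A∘A)(x)`: the number of pairs `(a₁, a₂) ∈ A × A` with `a₁ − a₂ = x`. -/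
def diffCount {G : Type*} [AddCommGroup G] [DecidableEq G] (A : Finset G) (x : G) : ℕ :=
  ((A ×ˢ A).filter fun q => q.1 - q.2 = x).card

/-- The energy of a set `A` and a function `f`:
`E(A, f) = ∑_x (A∘A)(x) · (f∘f)(x)` where `(f∘f)(x) = ∑_y f(y)·f(y+x)`. -/
def setFunEnergy {G : Type*} [AddCommGroup G] [Fintype G] [DecidableEq G]
    (A : Finset G) (f : G → ℝ) : ℝ :=
  ∑ x : G, (diffCount A x : ℝ) * (∑ y : G, f y * f (y + x))

section Aux

variable {G : Type*} [AddCommGroup G] [Fintype G] [DecidableEq G]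

/-- real indicator of a finset -/
noncomputable def indR (S : Finset G) (x : G) : ℝ := if x ∈ S then 1 else 0

lemma sum_indR (S : Finset G) (g : G → ℝ) : ∑ x ∈ S, g x = ∑ x : G, indR S x * g x := by
  simp [indR, ite_mul, Finset.sum_ite_mem, Finset.univ_inter]

lemma diffCount_eq_sum (A : Finset G) (x : G) :
    (diffCount A x : ℝ) = ∑ s : G, indR A (s + x) * indR A s := by
  unfold diffCount
  rw [Finset.card_filter]
  push_cast
  rw [Finset.sum_product]
  have h1 : ∀ a ∈ A, (∑ b ∈ A, if ((a, b) : G × G).1 - (a, b).2 = x then (1 : ℝ) else 0)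
      = indR A (a - x) := by
    intro a _
    have h0 : ∀ b ∈ A, (if ((a, b) : G × G).1 - (a, b).2 = x then (1 : ℝ) else 0)
        = if a - x = b then (1 : ℝ) else 0 := by
      intro b _
      congr 1
      simp only [eq_iff_iff]
      constructor
      · intro h; rw [← h]; abel
      · intro h; rw [← h]; abel
    rw [Finset.sum_congr rfl h0, Finset.sum_ite_eq]
    rfl
  rw [Finset.sum_congr rfl h1, sum_indR A (fun a => indR A (a - x))]
  refine Fintype.sum_equiv (Equiv.subRight x) _ _ fun a => ?_
  have h2 : (Equiv.subRight x) a = a - x := rfl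
  have h3 : a - x + x = a := by abel
  rw [h2, h3]

lemma kernel_eq (A : Finset G) (y z : G) :
    ∑ s : G, indR A (s + y) * indR A (s + z) = (diffCount A (y - z) : ℝ) := by
  rw [diffCount_eq_sum]
  refine Fintype.sum_equiv (Equiv.addRight z) _ _ fun s => ?_
  have h1 : (Equiv.addRight z) s = s + z := rfl
  have h2 : s + z + (y - z) = s + y := by abel
  rw [h1, h2]

end Aux

/-- The eigenvalue inequality (Lemma 7 / Theorem 57 of `s_ineq`): if `D = −D`,
`μ ≥ |A|⁻¹ ∑_{x ∈ D} (A∘A)(x)`, and `f ≥ 0` is an `ℓ²`-normalized function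
supported on `A` with `μ·f(x) = A(x)·(D∗f)(x)`, then
`μ²·E(A, f) ≤ ∑_{x,y,z ∈ A} D(x−y)·D(x−z)·(A∘A)(y−z)`. -/
theorem eigenvalue_energy_inequality {G : Type*} [AddCommGroup G] [Fintype G]
    [DecidableEq G] (A D : Finset G) (hD : ∀ x : G, x ∈ D ↔ -x ∈ D)
    (μ : ℝ) (hμ : μ ≥ (1 / (A.card : ℝ)) * ∑ x ∈ D, (diffCount A x : ℝ))
    (f : G → ℝ) (hf_nonneg : ∀ x, 0 ≤ f x) (hf_norm : ∑ x : G, f x ^ 2 = 1)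
    (hf_supp : ∀ x, f x ≠ 0 → x ∈ A)
    (hf_eigen : ∀ x : G, μ * f x = (if x ∈ A then (1 : ℝ) else 0) * ∑ y ∈ D, f (x - y)) :
    μ ^ 2 * setFunEnergy A f ≤
      ∑ x ∈ A, ∑ y ∈ A, ∑ z ∈ A,
        (if x - y ∈ D then (1 : ℝ) else 0) * (if x - z ∈ D then (1 : ℝ) else 0) *
          (diffCount A (y - z) : ℝ) := by
  classical
  set c : G → G → ℝ := fun s x => ∑ y ∈ A, indR D (x - y) * indR A (s + y) with hc_def
  -- eigen relation rewritten
  have hmf : ∀ y : G, μ * f y = indR A y * ∑ x ∈ A, f x * indR D (x - y) := by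
    intro y
    rw [hf_eigen y]
    have h1 : ∑ d ∈ D, f (y - d) = ∑ x ∈ A, f x * indR D (x - y) := by
      rw [sum_indR D (fun d => f (y - d)), sum_indR A (fun x => f x * indR D (x - y))]
      refine Fintype.sum_equiv (Equiv.subLeft y) _ _ fun d => ?_
      have h2 : (Equiv.subLeft y) d = y - d := rfl
      rw [h2]
      have h3 : y - d - y = -d := by abel
      rcases eq_or_ne (f (y - d)) 0 with h | h
      · rcases eq_or_ne (indR D d) 0 with h' | h'
        · rw [h, h']; ring
        · rw [h]; ring
      · have hy : y - d ∈ A := hf_supp _ h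
        have hind : indR A (y - d) = 1 := by simp [indR, hy]
        rw [hind, h3]
        have hDd : indR D d = indR D (-d) := by
          unfold indR
          by_cases hd : d ∈ D
          · rw [if_pos hd, if_pos ((hD d).mp hd)]
          · rw [if_neg hd, if_neg (fun hc => hd ((hD d).mpr hc))]
        rw [hDd]; ring
    rw [h1]; rfl
  -- step 1: μ² E = double sum with kernel
  have step1 : μ ^ 2 * setFunEnergy A f
      = ∑ y : G, ∑ z : G, (μ * f y) * (μ * f z) * (diffCount A (z - y) : ℝ) := by
    unfold setFunEnergy
    rw [Finset.mul_sum]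
    have h : ∀ x : G, μ ^ 2 * ((diffCount A x : ℝ) * ∑ y : G, f y * f (y + x))
        = ∑ y : G, (μ * f y) * (μ * f (y + x)) * (diffCount A x : ℝ) := by
      intro x
      rw [Finset.mul_sum, Finset.mul_sum]
      exact Finset.sum_congr rfl fun y _ => by ring
    rw [Finset.sum_congr rfl fun x _ => h x, Finset.sum_comm]
    refine Finset.sum_congr rfl fun y _ => ?_
    refine Fintype.sum_equiv (Equiv.addLeft y) _ _ fun x => ?_
    have h1 : (Equiv.addLeft y) x = y + x := rfl
    have h2 : y + x - y = x := by abel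
    rw [h1, h2]
  -- step 2a: sum of squares expands to double sum
  have step2a : (∑ s : G, (∑ y : G, (μ * f y) * indR A (s + y)) ^ 2)
      = ∑ y : G, ∑ z : G, (μ * f y) * (μ * f z) * (diffCount A (y - z) : ℝ) := by
    calc ∑ s : G, (∑ y : G, (μ * f y) * indR A (s + y)) ^ 2
        = ∑ s : G, ∑ y : G, ∑ z : G,
            ((μ * f y) * indR A (s + y)) * ((μ * f z) * indR A (s + z)) :=
          Finset.sum_congr rfl fun s _ => by rw [sq, Finset.sum_mul_sum]
      _ = ∑ y : G, ∑ s : G, ∑ z : G,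
            ((μ * f y) * indR A (s + y)) * ((μ * f z) * indR A (s + z)) := Finset.sum_comm
      _ = ∑ y : G, ∑ z : G, ∑ s : G,
            ((μ * f y) * indR A (s + y)) * ((μ * f z) * indR A (s + z)) :=
          Finset.sum_congr rfl fun y _ => Finset.sum_comm
      _ = ∑ y : G, ∑ z : G, (μ * f y) * (μ * f z) * (diffCount A (y - z) : ℝ) := by
          refine Finset.sum_congr rfl fun y _ => Finset.sum_congr rfl fun z _ => ?_
          rw [← kernel_eq A y z, Finset.mul_sum]
          exact Finset.sum_congr rfl fun s _ => by ring
  -- step 2b: swap the kernel argument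
  have step2b : (∑ y : G, ∑ z : G, (μ * f y) * (μ * f z) * (diffCount A (z - y) : ℝ))
      = ∑ y : G, ∑ z : G, (μ * f y) * (μ * f z) * (diffCount A (y - z) : ℝ) := by
    conv_lhs => rw [Finset.sum_comm]
    exact Finset.sum_congr rfl fun u _ => Finset.sum_congr rfl fun v _ => by ring
  -- the linear form in terms of c
  have hinner : ∀ s : G, (∑ y : G, (μ * f y) * indR A (s + y)) = ∑ x ∈ A, f x * c s x := by
    intro s
    have h1 : ∀ y : G, (μ * f y) * indR A (s + y)
        = ∑ x ∈ A, f x * (indR A y * (indR D (x - y) * indR A (s + y))) := by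
      intro y
      rw [hmf y, Finset.mul_sum, Finset.sum_mul]
      exact Finset.sum_congr rfl fun x _ => by ring
    rw [Finset.sum_congr rfl fun y _ => h1 y, Finset.sum_comm]
    refine Finset.sum_congr rfl fun x _ => ?_
    rw [← Finset.mul_sum]
    congr 1
    rw [hc_def]
    exact (sum_indR A fun y => indR D (x - y) * indR A (s + y)).symm
  -- the normalization restricted to A
  have hnormA : ∑ x ∈ A, f x ^ 2 = 1 := by
    rw [← hf_norm]
    refine Finset.sum_subset (Finset.subset_univ A) fun x _ hx => ?_
    have hfx : f x = 0 := by
      by_contra h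
      exact hx (hf_supp x h)
    rw [hfx]; ring
  -- Cauchy-Schwarz
  have hCS : ∀ s : G, (∑ x ∈ A, f x * c s x) ^ 2 ≤ ∑ x ∈ A, (c s x) ^ 2 := by
    intro s
    calc (∑ x ∈ A, f x * c s x) ^ 2
        ≤ (∑ x ∈ A, f x ^ 2) * ∑ x ∈ A, (c s x) ^ 2 :=
          Finset.sum_mul_sq_le_sq_mul_sq A f (c s)
      _ = ∑ x ∈ A, (c s x) ^ 2 := by rw [hnormA, one_mul]
  -- final identification of the RHS
  have hfinal : (∑ s : G, ∑ x ∈ A, (c s x) ^ 2)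
      = ∑ x ∈ A, ∑ y ∈ A, ∑ z ∈ A,
          (if x - y ∈ D then (1 : ℝ) else 0) * (if x - z ∈ D then (1 : ℝ) else 0) *
            (diffCount A (y - z) : ℝ) := by
    rw [Finset.sum_comm]
    refine Finset.sum_congr rfl fun x _ => ?_
    calc ∑ s : G, (c s x) ^ 2
        = ∑ s : G, ∑ y ∈ A, ∑ z ∈ A,
            (indR D (x - y) * indR A (s + y)) * (indR D (x - z) * indR A (s + z)) :=
          Finset.sum_congr rfl fun s _ => by rw [hc_def, sq, Finset.sum_mul_sum]
      _ = ∑ y ∈ A, ∑ s : G, ∑ z ∈ A,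
            (indR D (x - y) * indR A (s + y)) * (indR D (x - z) * indR A (s + z)) :=
          Finset.sum_comm
      _ = ∑ y ∈ A, ∑ z ∈ A, ∑ s : G,
            (indR D (x - y) * indR A (s + y)) * (indR D (x - z) * indR A (s + z)) :=
          Finset.sum_congr rfl fun y _ => Finset.sum_comm
      _ = ∑ y ∈ A, ∑ z ∈ A,
            (if x - y ∈ D then (1 : ℝ) else 0) * (if x - z ∈ D then (1 : ℝ) else 0) *
              (diffCount A (y - z) : ℝ) := by
          refine Finset.sum_congr rfl fun y _ => Finset.sum_congr rfl fun z _ => ?_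
          rw [← kernel_eq A y z, Finset.mul_sum]
          exact Finset.sum_congr rfl fun s _ => by unfold indR; ring
  -- put everything together
  calc μ ^ 2 * setFunEnergy A f
      = ∑ s : G, (∑ x ∈ A, f x * c s x) ^ 2 := by
        rw [step1, step2b, ← step2a]
        exact Finset.sum_congr rfl fun s _ => by rw [hinner s]
    _ ≤ ∑ s : G, ∑ x ∈ A, (c s x) ^ 2 := Finset.sum_le_sum fun s _ => hCS s
    _ = _ := hfinal
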